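/- Let W and Ŵ be independent Gamma random variables with positive integer shapes m, m̂ and scales Ω, Ω̂. Then for s < 0, the moment generating function M(s) = E[e^{s W Ŵ}] equals (e^{−1/(2sΩΩ̂)} / (−sΩΩ̂)^{(m+m̂−1)/2}) · W_{−(m+m̂−1)/2, (m−m̂)/2}(−1/(sΩΩ̂)), where W_{a,b} is the Whittaker function. -/

import Mathlib

/-!
Integrating out `V` first, the inner expectation is the Gamma MGF at `u = s W`, so
`M(s) = E[(1 - s Ω̂ W)^(-m̂)]`. The substitution `t = -s Ω̂ x` turns this Gamma integral into
`z^m U(m, 1 + m - m̂, z)` with `z = -1/(s Ω Ω̂)`, and the prefactor `e^(z/2) z^((m+m̂-1)/2)`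
cancels the factor `e^(-z/2) z^((m-m̂+1)/2)` that relates `W_{-(m+m̂-1)/2, (m-m̂)/2}(z)` to
`U(m, 1 + m - m̂, z)`.
-/

open MeasureTheory ProbabilityTheory Real Set

/-- Tricomi confluent hypergeometric function `U(a,b,z)`, via its integral
representation for `a > 0`, `z > 0`. -/
noncomputable def tricomiU (a b z : ℝ) : ℝ :=
  (1 / Real.Gamma a) *
    ∫ t in Ioi (0 : ℝ), t ^ (a - 1) * (1 + t) ^ (b - a - 1) * Real.exp (-z * t)

/-- Whittaker `W` function, expressed through the Tricomi function:
`W_{a,b}(z) = e^{-z/2} z^{b+1/2} U(b-a+1/2, 1+2b, z)`. -/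
noncomputable def whittakerW (a b z : ℝ) : ℝ :=
  Real.exp (-z / 2) * z ^ (b + 1 / 2) * tricomiU (b - a + 1 / 2) (1 + 2 * b) z

instance (a r : ℝ) : SFinite (gammaMeasure a r) := by
  unfold gammaMeasure
  infer_instance

lemma ae_nonneg_gammaMeasure (a r : ℝ) : ∀ᵐ x ∂gammaMeasure a r, 0 ≤ x := by
  rw [ae_iff]
  simp only [not_le]
  change gammaMeasure a r (Iio 0) = 0
  rw [gammaMeasure, withDensity_apply _ measurableSet_Iio]
  exact lintegral_gammaPDF_of_nonpos le_rfl

lemma integral_gammaMeasure {a r : ℝ} (ha : 0 < a) (hr : 0 < r) (g : ℝ → ℝ) :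
    ∫ x, g x ∂gammaMeasure a r =
      ∫ x in Ioi 0, r ^ a / Gamma a * x ^ (a - 1) * exp (-(r * x)) * g x := by
  rw [gammaMeasure, integral_withDensity_eq_integral_toReal_smul (f := gammaPDF a r)
    (measurable_gammaPDFReal a r).ennreal_ofReal (ae_of_all _ fun _ => ENNReal.ofReal_lt_top),
    ← integral_Ici_eq_integral_Ioi]
  symm
  calc ∫ x in Ici 0, r ^ a / Gamma a * x ^ (a - 1) * exp (-(r * x)) * g x
      = ∫ x in Ici 0, (gammaPDF a r x).toReal • g x :=
        setIntegral_congr_fun measurableSet_Ici fun x (hx : 0 ≤ x) => by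
          rw [gammaPDF_of_nonneg hx, ENNReal.toReal_ofReal (by positivity), smul_eq_mul]
    _ = ∫ x, (gammaPDF a r x).toReal • g x :=
        setIntegral_eq_integral_of_forall_compl_eq_zero fun x hx => by
          rw [gammaPDF_of_neg (by simpa using hx), ENNReal.toReal_zero, zero_smul]

lemma integral_exp_mul_gammaMeasure {a r u : ℝ} (ha : 0 < a) (hr : 0 < r) (hu : u < r) :
    ∫ x, exp (u * x) ∂gammaMeasure a r = (r / (r - u)) ^ a := by
  have hru : 0 < r - u := sub_pos.2 hu
  rw [integral_gammaMeasure ha hr]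
  calc ∫ x in Ioi 0, r ^ a / Gamma a * x ^ (a - 1) * exp (-(r * x)) * exp (u * x)
      = r ^ a / Gamma a * ∫ x in Ioi 0, x ^ (a - 1) * exp (-((r - u) * x)) := by
        rw [← integral_const_mul]
        refine setIntegral_congr_fun measurableSet_Ioi fun x _ => ?_
        rw [mul_assoc, mul_assoc, ← exp_add]
        ring_nf
    _ = (r / (r - u)) ^ a := by
        rw [integral_rpow_mul_exp_neg_mul_Ioi ha hru, div_rpow hr.le hru.le, one_div,
          inv_rpow hru.le]
        field_simp [(Gamma_pos_of_pos ha).ne']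

lemma integral_one_add_mul_rpow_neg_gammaMeasure {a r k q : ℝ} (ha : 0 < a) (hr : 0 < r)
    (hk : 0 < k) :
    ∫ x, (1 + k * x) ^ (-q) ∂gammaMeasure a r =
      (r / k) ^ a * tricomiU a (1 + a - q) (r / k) := by
  have hsub := integral_comp_mul_left_Ioi
    (fun t => t ^ (a - 1) * (1 + t) ^ (-q) * exp (-(r / k) * t)) 0 hk
  simp only [mul_zero, smul_eq_mul] at hsub
  rw [integral_gammaMeasure ha hr, tricomiU, show 1 + a - q - a - 1 = -q by ring]
  calc ∫ x in Ioi 0, r ^ a / Gamma a * x ^ (a - 1) * exp (-(r * x)) * (1 + k * x) ^ (-q)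
      = (r / k) ^ a / Gamma a * k * ∫ x in Ioi 0,
          (k * x) ^ (a - 1) * (1 + k * x) ^ (-q) * exp (-(r / k) * (k * x)) := by
        rw [← integral_const_mul]
        refine setIntegral_congr_fun measurableSet_Ioi fun x (hx : 0 < x) => ?_
        have hexp : -(r / k) * (k * x) = -(r * x) := by field_simp
        rw [hexp, mul_rpow hk.le hx.le, rpow_sub_one hk.ne', div_rpow hr.le hk.le]
        field_simp
    _ = _ := by
        rw [hsub]
        field_simp

lemma integrable_exp_mul_mul_prod_gammaMeasure {a₁ r₁ a₂ r₂ s : ℝ} (ha₁ : 0 < a₁)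
    (hr₁ : 0 < r₁) (ha₂ : 0 < a₂) (hr₂ : 0 < r₂) (hs : s ≤ 0) :
    Integrable (fun p : ℝ × ℝ => exp (s * (p.1 * p.2)))
      ((gammaMeasure a₁ r₁).prod (gammaMeasure a₂ r₂)) := by
  have := isProbabilityMeasure_gammaMeasure ha₁ hr₁
  have := isProbabilityMeasure_gammaMeasure ha₂ hr₂
  refine Integrable.mono' (integrable_const 1) (by fun_prop) ?_
  filter_upwards [Measure.quasiMeasurePreserving_fst.ae (ae_nonneg_gammaMeasure a₁ r₁),
    Measure.quasiMeasurePreserving_snd.ae (ae_nonneg_gammaMeasure a₂ r₂)] with p hp₁ hp₂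
  rw [norm_of_nonneg (exp_nonneg _), exp_le_one_iff]
  exact mul_nonpos_of_nonpos_of_nonneg hs (mul_nonneg hp₁ hp₂)

lemma integral_exp_mul_mul_prod_gammaMeasure {a₁ r₁ a₂ r₂ s : ℝ} (ha₁ : 0 < a₁)
    (hr₁ : 0 < r₁) (ha₂ : 0 < a₂) (hr₂ : 0 < r₂) (hs : s < 0) :
    ∫ p : ℝ × ℝ, exp (s * (p.1 * p.2)) ∂(gammaMeasure a₁ r₁).prod (gammaMeasure a₂ r₂) =
      (-(r₁ * r₂ / s)) ^ a₁ * tricomiU a₁ (1 + a₁ - a₂) (-(r₁ * r₂ / s)) := by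
  have hk : 0 < -s / r₂ := div_pos (neg_pos.2 hs) hr₂
  have hinner : ∀ᵐ x ∂gammaMeasure a₁ r₁,
      ∫ y, exp (s * (x * y)) ∂gammaMeasure a₂ r₂ = (1 + -s / r₂ * x) ^ (-a₂) := by
    filter_upwards [ae_nonneg_gammaMeasure a₁ r₁] with x hx
    have hsx : s * x < r₂ := by nlinarith
    simp_rw [← mul_assoc]
    rw [integral_exp_mul_gammaMeasure ha₂ hr₂ hsx, rpow_neg (by positivity), ← inv_rpow]
    · congr 1
      field_simp
      ring
    · positivity
  rw [integral_prod _ (integrable_exp_mul_mul_prod_gammaMeasure ha₁ hr₁ ha₂ hr₂ hs.le),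
    integral_congr_ae hinner, integral_one_add_mul_rpow_neg_gammaMeasure ha₁ hr₁ hk,
    show r₁ / (-s / r₂) = -(r₁ * r₂ / s) by field_simp]

lemma exp_mul_rpow_mul_whittakerW {p q z : ℝ} (hz : 0 < z) :
    exp (z / 2) * z ^ ((p + q - 1) / 2) * whittakerW (-((p + q - 1) / 2)) ((p - q) / 2) z =
      z ^ p * tricomiU p (1 + p - q) z := by
  rw [whittakerW, show (p - q) / 2 - -((p + q - 1) / 2) + 1 / 2 = p by ring,
    show 1 + 2 * ((p - q) / 2) = 1 + p - q by ring]
  calc _ = (exp (z / 2) * exp (-z / 2)) * (z ^ ((p + q - 1) / 2) * z ^ ((p - q) / 2 + 1 / 2)) *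
        tricomiU p (1 + p - q) z := by ring
    _ = _ := by
        rw [← exp_add, ← rpow_add hz, show z / 2 + -z / 2 = 0 by ring,
          show (p + q - 1) / 2 + ((p - q) / 2 + 1 / 2) = p by ring, exp_zero, one_mul]

theorem product_gamma_mgf_general
    {α : Type*} [MeasurableSpace α] (μ : Measure α)
    (W V : α → ℝ) (hWm : Measurable W) (hVm : Measurable V)
    (m mh : ℕ) (hm : 0 < m) (hmh : 0 < mh)
    (Ω₁ Ω₂ : ℝ) (hΩ₁ : 0 < Ω₁) (hΩ₂ : 0 < Ω₂)
    (hW : μ.map W = gammaMeasure m (1 / Ω₁))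
    (hV : μ.map V = gammaMeasure mh (1 / Ω₂))
    (hindep : IndepFun W V μ)
    (s : ℝ) (hs : s < 0) :
    ∫ ω, Real.exp (s * (W ω * V ω)) ∂μ =
      Real.exp (-1 / (2 * s * Ω₁ * Ω₂)) / (-(s * Ω₁ * Ω₂)) ^ (((m : ℝ) + mh - 1) / 2) *
        whittakerW (-(((m : ℝ) + mh - 1) / 2)) (((m : ℝ) - mh) / 2)
          (-(1 / (s * Ω₁ * Ω₂))) := by
  have hm' : (0 : ℝ) < m := Nat.cast_pos.2 hm
  have hmh' : (0 : ℝ) < mh := Nat.cast_pos.2 hmh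
  have hr₁ : 0 < 1 / Ω₁ := one_div_pos.2 hΩ₁
  have hr₂ : 0 < 1 / Ω₂ := one_div_pos.2 hΩ₂
  have hjoint : μ.map (fun ω => (W ω, V ω)) =
      (gammaMeasure m (1 / Ω₁)).prod (gammaMeasure mh (1 / Ω₂)) := by
    have := isProbabilityMeasure_gammaMeasure hm' hr₁
    have := isProbabilityMeasure_gammaMeasure hmh' hr₂
    rw [← hW, ← hV]
    exact (indepFun_iff_map_prod_eq_prod_map_map' hWm.aemeasurable hVm.aemeasurable
      (by rw [hW]; infer_instance) (by rw [hV]; infer_instance)).1 hindep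
  have hc : 0 < -(s * Ω₁ * Ω₂) := by have := mul_pos hΩ₁ hΩ₂; nlinarith
  set z := -(1 / (s * Ω₁ * Ω₂)) with hz_def
  have hz : z = (-(s * Ω₁ * Ω₂))⁻¹ := by rw [hz_def, one_div, neg_inv]
  calc ∫ ω, exp (s * (W ω * V ω)) ∂μ
      = ∫ p : ℝ × ℝ, exp (s * (p.1 * p.2))
          ∂(gammaMeasure m (1 / Ω₁)).prod (gammaMeasure mh (1 / Ω₂)) := by
        rw [← hjoint, integral_map (hWm.prodMk hVm).aemeasurable (by fun_prop)]
    _ = z ^ (m : ℝ) * tricomiU m (1 + m - mh) z := by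
        rw [integral_exp_mul_mul_prod_gammaMeasure hm' hr₁ hmh' hr₂ hs,
          show -(1 / Ω₁ * (1 / Ω₂) / s) = z by rw [hz_def]; field_simp]
    _ = exp (z / 2) * z ^ (((m : ℝ) + mh - 1) / 2) *
          whittakerW (-(((m : ℝ) + mh - 1) / 2)) (((m : ℝ) - mh) / 2) z :=
        (exp_mul_rpow_mul_whittakerW (hz ▸ inv_pos.2 hc)).symm
    _ = _ := by
        rw [show z / 2 = -1 / (2 * s * Ω₁ * Ω₂) by rw [hz_def]; field_simp, div_eq_mul_inv (exp _),
          ← inv_rpow hc.le, ← hz]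

/-- MGF of the product of two independent Gamma random variables, for `s < 0`. -/
theorem product_gamma_mgf
    {α : Type*} [MeasurableSpace α] (μ : Measure α) [IsProbabilityMeasure μ]
    (W V : α → ℝ) (hWm : Measurable W) (hVm : Measurable V)
    (m mh : ℕ) (hm : 0 < m) (hmh : 0 < mh)
    (Ω₁ Ω₂ : ℝ) (hΩ₁ : 0 < Ω₁) (hΩ₂ : 0 < Ω₂)
    (hW : μ.map W = gammaMeasure m (1 / Ω₁))
    (hV : μ.map V = gammaMeasure mh (1 / Ω₂))
    (hindep : IndepFun W V μ)
    (s : ℝ) (hs : s < 0) :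
    ∫ ω, Real.exp (s * (W ω * V ω)) ∂μ =
      Real.exp (-1 / (2 * s * Ω₁ * Ω₂)) / (-(s * Ω₁ * Ω₂)) ^ (((m : ℝ) + mh - 1) / 2) *
        whittakerW (-(((m : ℝ) + mh - 1) / 2)) (((m : ℝ) - mh) / 2)
          (-(1 / (s * Ω₁ * Ω₂))) :=
  product_gamma_mgf_general μ W V hWm hVm m mh hm hmh Ω₁ Ω₂ hΩ₁ hΩ₂ hW hV hindep s hs
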